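/- Let (H, m, u, Δ, ε) be a bialgebra over a commutative ring k equipped with k-submodules Hⁿ (n ≥ 0) such that Hⁿ ⊆ Hⁿ⁺¹ for all n, H = ⋃_{n≥0} Hⁿ, Δ(Hⁿ) ⊆ Σ_{p+q=n} (image of H^p ⊗ H^q in H ⊗ H) for all n, Hⁿ = im(u) ⊕ (Hⁿ ∩ ker ε) for all n, and H⁰ = im(u) (a connected coaugmented cofiltered bialgebra). Then H is a Hopf algebra: there is a k-linear antipode S : H → H satisfying m ∘ (S ⊗ id) ∘ Δ = u ∘ ε = m ∘ (id ⊗ S) ∘ Δ, given explicitly by S(1_H) = 1_H and, for x ∈ ker ε, S(x) = −x + Σ_{n≥1} (−1)^{n+1} mⁿ(Δ̄ⁿ(x)), where Δ̄(x) := Δ(x) − 1_H ⊗ x − x ⊗ 1_H lies in ker ε ⊗ ker ε, Δ̄ⁿ and mⁿ denote the n-fold iterated reduced coproduct and iterated multiplication, and only finitely many terms of the sum are nonzero for each x. -/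

import Mathlib

open scoped TensorProduct

/-- The reduced coproduct `Δ̄(x) = Δ(x) − 1 ⊗ x − x ⊗ 1` of a bialgebra. -/
noncomputable def redComul (R H : Type*) [CommRing R] [Ring H] [Bialgebra R H] : H →ₗ[R] H ⊗[R] H where
  toFun x := Coalgebra.comul x - (1 : H) ⊗ₜ[R] x - x ⊗ₜ[R] (1 : H)
  map_add' x y := by
    simp only [map_add, TensorProduct.tmul_add, TensorProduct.add_tmul]
    module
  map_smul' c x := by
    simp only [map_smul, TensorProduct.tmul_smul, TensorProduct.smul_tmul',
      RingHom.id_apply, smul_sub]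

/-- The `n`-fold convolution iterate `mⁿ ∘ Δ̄ⁿ` (with `m⁰ ∘ Δ̄⁰ = id`), defined
recursively by `m ∘ (id ⊗ (mⁿ⁻¹ ∘ Δ̄ⁿ⁻¹)) ∘ Δ̄`. -/
noncomputable def convIter (R H : Type*) [CommRing R] [Ring H] [Bialgebra R H] : ℕ → (H →ₗ[R] H)
  | 0 => LinearMap.id
  | n + 1 =>
      (LinearMap.mul' R H) ∘ₗ (LinearMap.lTensor H (convIter R H n)) ∘ₗ redComul R H

/-!
In the convolution algebra `WithConv (H →ₗ[R] H)` write `id = 1 + P` with `P = id - u ∘ ε`.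
Since `P` kills `H⁰ = im u` and `Δ(Hⁿ) ⊆ Σ_{p+q=n} Hᵖ ⊗ H^q`, the power `P^{n+1}` vanishes on `Hⁿ`;
so the geometric series `S = Σₖ (-P)^k` is a pointwise finite sum, and
`(Σ_{k<N} (-P)^k) * (1 + P) = 1 - (-P)^N = (1 + P) * (Σ_{k<N} (-P)^k)` on `Hⁿ` for `N > n`
makes `S` a two-sided convolution inverse of `id`. The identity `(P ⊗ P) ∘ Δ = Δ̄ ∘ P`
gives `P^{k+1} = mᵏ ∘ Δ̄ᵏ ∘ P`, which turns the series into the stated formula.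
-/

open TensorProduct WithConv Coalgebra

lemma Submodule.exists_mem_of_iSup_eq_top {R M : Type*} [Semiring R] [AddCommMonoid M]
    [Module R M] {ℋ : ℕ → Submodule R M} (hmono : Monotone ℋ) (hexh : ⨆ n, ℋ n = ⊤) (x : M) :
    ∃ n, x ∈ ℋ n :=
  (Submodule.mem_iSup_of_directed ℋ hmono.directed_le).1 (hexh ▸ Submodule.mem_top)

lemma Submodule.sum_le_of_forall_le {ι R M : Type*} [Semiring R] [AddCommMonoid M]
    [Module R M] {s : Finset ι} {p : ι → Submodule R M} {q : Submodule R M}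
    (h : ∀ i ∈ s, p i ≤ q) : ∑ i ∈ s, p i ≤ q :=
  Finset.sum_induction p (· ≤ q) (fun _ _ ↦ sup_le) bot_le h

namespace LinearMap

section LocallyFiniteSum

variable {ι R M N : Type*} [Semiring R] [AddCommMonoid M] [AddCommMonoid N] [Module R M]
  [Module R N]

noncomputable def locallyFiniteSum (f : ι → M →ₗ[R] N)
    (hf : ∀ x, (Function.support fun i ↦ f i x).Finite) : M →ₗ[R] N where
  toFun x := ∑ᶠ i, f i x
  map_add' x y := by simp only [map_add, finsum_add_distrib (hf x) (hf y)]
  map_smul' c x := by simp only [map_smul, smul_finsum' c (hf x), RingHom.id_apply]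

lemma locallyFiniteSum_apply_eq_sum (f : ι → M →ₗ[R] N)
    (hf : ∀ x, (Function.support fun i ↦ f i x).Finite) {x : M} (s : Finset ι)
    (hs : ∀ i ∉ s, f i x = 0) : locallyFiniteSum f hf x = ∑ i ∈ s, f i x :=
  finsum_eq_sum_of_support_subset _ fun i hi ↦ by_contra fun h ↦ hi (hs i h)

end LocallyFiniteSum

variable {R C A : Type*} [CommSemiring R] [AddCommMonoid C] [Module R C] [CoalgebraStruct R C]
  [Semiring A] [Algebra R A] {f g f' g' : WithConv (C →ₗ[R] A)} {p q : Submodule R C} {x : C}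

lemma convMul_apply_eq_zero_of_comul_mem
    (hx : comul (R := R) x ∈ Submodule.map₂ (TensorProduct.mk R C C) p q)
    (h : ∀ a ∈ p, ∀ b ∈ q, f a * g b = 0) : (f * g) x = 0 := by
  have hker : Submodule.map₂ (TensorProduct.mk R C C) p q ≤
      ker (mul' R A ∘ₗ map f.ofConv g.ofConv) :=
    Submodule.map₂_le.2 fun a ha b hb ↦ by simpa using h a ha b hb
  exact hker hx

lemma convMul_apply_eq_of_comul_mem
    (hx : comul (R := R) x ∈ Submodule.map₂ (TensorProduct.mk R C C) p q)
    (hf : ∀ a ∈ p, f a = f' a) (hg : ∀ b ∈ q, g b = g' b) : (f * g) x = (f' * g') x := by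
  have hle : Submodule.map₂ (TensorProduct.mk R C C) p q ≤
      eqLocus (mul' R A ∘ₗ map f.ofConv g.ofConv) (mul' R A ∘ₗ map f'.ofConv g'.ofConv) :=
    Submodule.map₂_le.2 fun a ha b hb ↦ by simp [hf a ha, hg b hb]
  exact hle hx

end LinearMap

structure IsCoalgebraFiltration {R C : Type*} [CommSemiring R] [AddCommMonoid C] [Module R C]
    [CoalgebraStruct R C] (ℋ : ℕ → Submodule R C) : Prop where
  mono : Monotone ℋ
  comul_mem : ∀ n : ℕ, ∀ x ∈ ℋ n, comul (R := R) x ∈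
    ∑ pq ∈ Finset.HasAntidiagonal.antidiagonal n,
      Submodule.map₂ (TensorProduct.mk R C C) (ℋ pq.1) (ℋ pq.2)

namespace IsCoalgebraFiltration

open LinearMap

variable {R C A : Type*} [CommSemiring R] [AddCommMonoid C] [Module R C] [Coalgebra R C]
  {ℋ : ℕ → Submodule R C}

lemma comul_mem_map₂ (hℋ : IsCoalgebraFiltration ℋ) {n : ℕ} {x : C} (hx : x ∈ ℋ n) :
    comul (R := R) x ∈ Submodule.map₂ (TensorProduct.mk R C C) (ℋ n) (ℋ n) := by
  refine Submodule.sum_le_of_forall_le (fun pq hpq ↦ ?_) (hℋ.comul_mem n x hx)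
  rw [Finset.HasAntidiagonal.mem_antidiagonal] at hpq
  exact Submodule.map₂_le_map₂ (hℋ.mono (by omega)) (hℋ.mono (by omega))

lemma convPow_apply_eq_zero [Semiring A] [Algebra R A] (hℋ : IsCoalgebraFiltration ℋ)
    {f : WithConv (C →ₗ[R] A)} (hf : ∀ x ∈ ℋ 0, f x = 0) {n : ℕ} {x : C} (hx : x ∈ ℋ n)
    {k : ℕ} (hk : n < k) : (f ^ k) x = 0 := by
  induction n generalizing x k with
  | zero =>
    obtain ⟨j, rfl⟩ := Nat.exists_eq_add_of_lt hk
    rw [pow_succ]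
    exact convMul_apply_eq_zero_of_comul_mem (hℋ.comul_mem_map₂ hx)
      fun a _ b hb ↦ by rw [hf b hb, mul_zero]
  | succ n ih =>
    obtain ⟨j, rfl⟩ := Nat.exists_eq_add_of_lt hk
    rw [pow_succ']
    have hker : ∑ pq ∈ Finset.HasAntidiagonal.antidiagonal (n + 1),
        Submodule.map₂ (TensorProduct.mk R C C) (ℋ pq.1) (ℋ pq.2) ≤
          ker (mul' R A ∘ₗ map f.ofConv (f ^ (n + 1 + j)).ofConv) := by
      refine Submodule.sum_le_of_forall_le fun ⟨p, q⟩ hpq ↦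
        Submodule.map₂_le.2 fun a ha b hb ↦ ?_
      rw [Finset.HasAntidiagonal.mem_antidiagonal] at hpq
      rcases p with _ | p
      · simp [hf a ha]
      · simp [ih (hℋ.mono (by omega : q ≤ n) hb) (by omega : n < n + 1 + j)]
    exact hker (hℋ.comul_mem _ x hx)

theorem exists_convMul_one_sub_eq_one [Ring A] [Algebra R A]
    (hℋ : IsCoalgebraFiltration ℋ) (hexh : ⨆ n, ℋ n = ⊤) {f : WithConv (C →ₗ[R] A)}
    (hf : ∀ x ∈ ℋ 0, f x = 0) :
    ∃ g : WithConv (C →ₗ[R] A), g * (1 - f) = 1 ∧ (1 - f) * g = 1 ∧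
      ∀ {n : ℕ} {x : C}, x ∈ ℋ n → ∀ {N : ℕ}, n < N →
        g x = ∑ k ∈ Finset.range N, (f ^ k) x := by
  have hdeg := Submodule.exists_mem_of_iSup_eq_top hℋ.mono hexh
  have hfin (x : C) : (Function.support fun k ↦ (f ^ k).ofConv x).Finite := by
    obtain ⟨n, hx⟩ := hdeg x
    refine (Finset.range (n + 1)).finite_toSet.subset fun k hk ↦ ?_
    by_contra hkn
    simp only [Finset.coe_range, Set.mem_Iio, not_lt] at hkn
    exact hk (hℋ.convPow_apply_eq_zero hf hx hkn)
  set g := toConv (locallyFiniteSum (fun k ↦ (f ^ k).ofConv) hfin)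
  have hg {n : ℕ} {x : C} (hx : x ∈ ℋ n) {N : ℕ} (hN : n < N) :
      g x = ∑ k ∈ Finset.range N, (f ^ k) x :=
    locallyFiniteSum_apply_eq_sum _ hfin _ fun k hk ↦
      hℋ.convPow_apply_eq_zero hf hx (by rw [Finset.mem_range, not_lt] at hk; omega)
  refine ⟨g, ?_, ?_, hg⟩ <;> ext x <;> obtain ⟨n, hx⟩ := hdeg x
  · calc (g * (1 - f)) x = ((∑ k ∈ Finset.range (n + 1), f ^ k) * (1 - f)) x :=
          convMul_apply_eq_of_comul_mem (hℋ.comul_mem_map₂ hx)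
            (fun a ha ↦ by simp [hg ha (Nat.lt_succ_self n)]) fun _ _ ↦ rfl
      _ = (1 : WithConv (C →ₗ[R] A)) x := by
          simp [geom_sum_mul_neg, hℋ.convPow_apply_eq_zero hf hx (Nat.lt_succ_self n)]
  · calc ((1 - f) * g) x = ((1 - f) * ∑ k ∈ Finset.range (n + 1), f ^ k) x :=
          convMul_apply_eq_of_comul_mem (hℋ.comul_mem_map₂ hx)
            (fun _ _ ↦ rfl) fun a ha ↦ by simp [hg ha (Nat.lt_succ_self n)]
      _ = (1 : WithConv (C →ₗ[R] A)) x := by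
          simp [mul_neg_geom_sum, hℋ.convPow_apply_eq_zero hf hx (Nat.lt_succ_self n)]

end IsCoalgebraFiltration

section Bialgebra

open LinearMap

variable (R H : Type*) [CommRing R] [Ring H] [Bialgebra R H]

noncomputable def augmentationProj : WithConv (H →ₗ[R] H) := toConv LinearMap.id - 1

variable {R H}

lemma augmentationProj_apply (x : H) :
    augmentationProj R H x = x - algebraMap R H (counit x) := rfl

lemma counit_augmentationProj_apply (x : H) : counit (R := R) (augmentationProj R H x) = 0 := by
  simp [augmentationProj_apply]

lemma augmentationProj_apply_of_counit_eq_zero {x : H} (hx : counit (R := R) x = 0) :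
    augmentationProj R H x = x := by
  simp [augmentationProj_apply, hx]

lemma lTensor_augmentationProj_comul (x : H) :
    lTensor H (augmentationProj R H).ofConv (comul x) = comul x - x ⊗ₜ 1 := by
  have h := congrArg (lTensor H (Algebra.linearMap R H)) (lTensor_counit_comul (R := R) x)
  rw [← lTensor_comp_apply] at h
  simpa [augmentationProj, lTensor_sub, LinearMap.convOne_def] using h

lemma rTensor_augmentationProj_comul (x : H) :
    rTensor H (augmentationProj R H).ofConv (comul x) = comul x - 1 ⊗ₜ x := by
  have h := congrArg (rTensor H (Algebra.linearMap R H)) (rTensor_counit_comul (R := R) x)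
  rw [← rTensor_comp_apply] at h
  simpa [augmentationProj, rTensor_sub, LinearMap.convOne_def] using h

lemma map_augmentationProj_comp_comul :
    map (augmentationProj R H).ofConv (augmentationProj R H).ofConv ∘ₗ comul =
      redComul R H ∘ₗ (augmentationProj R H).ofConv := by
  ext x
  rw [comp_apply, ← rTensor_comp_lTensor, comp_apply, lTensor_augmentationProj_comul, map_sub,
    rTensor_augmentationProj_comul, rTensor_tmul, comp_apply, augmentationProj_apply]
  show _ = comul (R := R) (x - _) - 1 ⊗ₜ (x - _) - (x - _) ⊗ₜ 1
  rw [map_sub, Bialgebra.comul_algebraMap, Algebra.TensorProduct.algebraMap_apply]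
  simp only [Algebra.algebraMap_eq_smul_one, smul_tmul', tmul_smul, sub_tmul, tmul_sub]
  abel

lemma augmentationProj_pow_succ (k : ℕ) :
    (augmentationProj R H ^ (k + 1)).ofConv =
      convIter R H k ∘ₗ (augmentationProj R H).ofConv := by
  induction k with
  | zero => simp [convIter]
  | succ k ih =>
    rw [pow_succ', LinearMap.convMul_def, ofConv_toConv, ih, ← lTensor_comp_map, comp_assoc,
      map_augmentationProj_comp_comul]
    rfl

lemma convIter_apply_of_counit_eq_zero {x : H} (hx : counit (R := R) x = 0) (k : ℕ) :
    convIter R H k x = (augmentationProj R H ^ (k + 1)) x := by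
  rw [augmentationProj_pow_succ, comp_apply, augmentationProj_apply_of_counit_eq_zero hx]

lemma redComul_mem_map₂_ker {x : H} (hx : counit (R := R) x = 0) :
    redComul R H x ∈ Submodule.map₂ (TensorProduct.mk R H H) (ker counit) (ker counit) := by
  have hle : Submodule.map₂ (TensorProduct.mk R H H) ⊤ ⊤ ≤
      (Submodule.map₂ (TensorProduct.mk R H H) (ker counit) (ker counit)).comap
        (map (augmentationProj R H).ofConv (augmentationProj R H).ofConv) :=
    Submodule.map₂_le.2 fun a _ b _ ↦ Submodule.apply_mem_map₂ _
      (counit_augmentationProj_apply a) (counit_augmentationProj_apply b)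
  rw [map₂_mk_top_top_eq_top] at hle
  rw [← augmentationProj_apply_of_counit_eq_zero hx, ← comp_apply,
    ← map_augmentationProj_comp_comul]
  exact hle Submodule.mem_top

lemma sum_range_neg_augmentationProj_pow_apply {x : H} (hx : counit (R := R) x = 0) (N : ℕ) :
    ∑ k ∈ Finset.range (N + 2), ((-augmentationProj R H) ^ k) x =
      -x + ∑ n ∈ Finset.Icc 1 N, ((-1 : R) ^ (n + 1)) • convIter R H n x := by
  have hpow (k : ℕ) : ((-augmentationProj R H) ^ (k + 1)) x =
      ((-1 : R) ^ (k + 1)) • convIter R H k x := by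
    rw [← neg_one_smul R (augmentationProj R H), smul_pow, convIter_apply_of_counit_eq_zero hx]
    rfl
  rw [Finset.sum_range_succ', Finset.range_eq_Ico, Finset.sum_eq_sum_Ico_succ_bot (by omega),
    ← Finset.Ico_add_one_right_eq_Icc]
  simp [hpow, hx, augmentationProj_apply_of_counit_eq_zero hx]

lemma apply_one_of_convMul_id_eq_one {f : WithConv (H →ₗ[R] H)}
    (hf : f * toConv LinearMap.id = 1) : f 1 = 1 := by
  simpa [Algebra.TensorProduct.one_def] using congrArg (fun g : WithConv (H →ₗ[R] H) ↦ g 1) hf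

end Bialgebra

theorem connected_cofiltered_bialgebra_is_hopf_general
    (R H : Type) [CommRing R] [Ring H] [Bialgebra R H]
    (ℋ : ℕ → Submodule R H)
    -- `Hⁿ ⊆ Hⁿ⁺¹`
    (hmono : ∀ n : ℕ, ℋ n ≤ ℋ (n + 1))
    -- `H = ⋃ₙ Hⁿ`
    (hexh : (⨆ n : ℕ, ℋ n) = ⊤)
    -- `Δ(Hⁿ) ⊆ Σ_{p+q=n} H^p ⊗ H^q` (image in `H ⊗ H`)
    (hcomul : ∀ n : ℕ, ∀ x ∈ ℋ n,
        Coalgebra.comul (R := R) x ∈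
          ∑ pq ∈ Finset.HasAntidiagonal.antidiagonal n,
            Submodule.map₂ (TensorProduct.mk R H H) (ℋ pq.1) (ℋ pq.2))
    -- connectedness: `H⁰ = im(u)`
    (hconn : ℋ 0 = LinearMap.range (Algebra.linearMap R H)) :
    ∃ S : H →ₗ[R] H,
      (LinearMap.mul' R H) ∘ₗ (LinearMap.rTensor H S) ∘ₗ Coalgebra.comul
          = (Algebra.linearMap R H) ∘ₗ Coalgebra.counit
      ∧ (LinearMap.mul' R H) ∘ₗ (LinearMap.lTensor H S) ∘ₗ Coalgebra.comul
          = (Algebra.linearMap R H) ∘ₗ Coalgebra.counit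
      ∧ S 1 = 1
      ∧ ∀ x : H, Coalgebra.counit (R := R) x = 0 →
          redComul R H x ∈
            Submodule.map₂ (TensorProduct.mk R H H)
              (LinearMap.ker (Coalgebra.counit (R := R) (A := H)))
              (LinearMap.ker (Coalgebra.counit (R := R) (A := H)))
          ∧ ∃ N : ℕ, (∀ n : ℕ, N < n → convIter R H n x = 0)
              ∧ S x = -x + ∑ n ∈ Finset.Icc 1 N,
                  ((-1 : R) ^ (n + 1)) • convIter R H n x := by
  have hℋ : IsCoalgebraFiltration ℋ := ⟨monotone_nat_of_le_succ hmono, hcomul⟩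
  have hP : ∀ x ∈ ℋ 0, augmentationProj R H x = 0 := by
    rw [hconn]
    rintro _ ⟨c, rfl⟩
    simp [augmentationProj_apply]
  obtain ⟨S, hSid, hidS, hS⟩ :=
    hℋ.exists_convMul_one_sub_eq_one hexh (f := -augmentationProj R H)
      fun x hx ↦ by simp [hP x hx]
  rw [sub_neg_eq_add, augmentationProj, add_sub_cancel] at hSid hidS
  refine ⟨S.ofConv, congrArg ofConv hSid, congrArg ofConv hidS,
    apply_one_of_convMul_id_eq_one hSid, fun x hx ↦ ⟨redComul_mem_map₂_ker hx, ?_⟩⟩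
  obtain ⟨N, hxN⟩ := Submodule.exists_mem_of_iSup_eq_top hℋ.mono hexh x
  refine ⟨N, fun n hn ↦ ?_, ?_⟩
  · rw [convIter_apply_of_counit_eq_zero hx]
    exact hℋ.convPow_apply_eq_zero hP hxN (by omega)
  · rw [hS hxN (by omega : N < N + 2), sum_range_neg_augmentationProj_pow_apply hx]

/-- A connected coaugmented cofiltered bialgebra `(H, m, u, Δ, ε)`
over a commutative ring `k` is a Hopf algebra, with antipode `S` satisfying
`m ∘ (S ⊗ id) ∘ Δ = u ∘ ε = m ∘ (id ⊗ S) ∘ Δ`, given by `S(1) = 1` and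
`S(x) = −x + Σ_{n≥1} (−1)^{n+1} mⁿ(Δ̄ⁿ(x))` for `x ∈ ker ε`, where
`Δ̄(x) = Δ(x) − 1 ⊗ x − x ⊗ 1` lies in `ker ε ⊗ ker ε` and only finitely many terms
of the sum are nonzero. -/
theorem connected_cofiltered_bialgebra_is_hopf
    (R H : Type) [CommRing R] [Ring H] [Bialgebra R H]
    (ℋ : ℕ → Submodule R H)
    -- `Hⁿ ⊆ Hⁿ⁺¹`
    (hmono : ∀ n : ℕ, ℋ n ≤ ℋ (n + 1))
    -- `H = ⋃ₙ Hⁿ`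
    (hexh : (⨆ n : ℕ, ℋ n) = ⊤)
    -- `Δ(Hⁿ) ⊆ Σ_{p+q=n} H^p ⊗ H^q` (image in `H ⊗ H`)
    (hcomul : ∀ n : ℕ, ∀ x ∈ ℋ n,
        Coalgebra.comul (R := R) x ∈
          ∑ pq ∈ Finset.HasAntidiagonal.antidiagonal n,
            Submodule.map₂ (TensorProduct.mk R H H) (ℋ pq.1) (ℋ pq.2))
    -- `Hⁿ = im(u) ⊕ (Hⁿ ∩ ker ε)`
    (hsplit : ∀ n : ℕ,
        ℋ n = LinearMap.range (Algebra.linearMap R H)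
            ⊔ (ℋ n ⊓ LinearMap.ker (Coalgebra.counit (R := R) (A := H))))
    (hdisj : ∀ n : ℕ,
        Disjoint (LinearMap.range (Algebra.linearMap R H))
          (ℋ n ⊓ LinearMap.ker (Coalgebra.counit (R := R) (A := H))))
    -- connectedness: `H⁰ = im(u)`
    (hconn : ℋ 0 = LinearMap.range (Algebra.linearMap R H)) :
    ∃ S : H →ₗ[R] H,
      (LinearMap.mul' R H) ∘ₗ (LinearMap.rTensor H S) ∘ₗ Coalgebra.comul
          = (Algebra.linearMap R H) ∘ₗ Coalgebra.counit
      ∧ (LinearMap.mul' R H) ∘ₗ (LinearMap.lTensor H S) ∘ₗ Coalgebra.comul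
          = (Algebra.linearMap R H) ∘ₗ Coalgebra.counit
      ∧ S 1 = 1
      ∧ ∀ x : H, Coalgebra.counit (R := R) x = 0 →
          redComul R H x ∈
            Submodule.map₂ (TensorProduct.mk R H H)
              (LinearMap.ker (Coalgebra.counit (R := R) (A := H)))
              (LinearMap.ker (Coalgebra.counit (R := R) (A := H)))
          ∧ ∃ N : ℕ, (∀ n : ℕ, N < n → convIter R H n x = 0)
              ∧ S x = -x + ∑ n ∈ Finset.Icc 1 N,
                  ((-1 : R) ^ (n + 1)) • convIter R H n x :=
  connected_cofiltered_bialgebra_is_hopf_general R H ℋ hmono hexh hcomul hconn
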